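/- arXiv:2405.18996 — 4 statements merged into one kernel-verified Lean document; each statement's English description precedes it below -/
import Mathlib

section
/- An F_q-subspace U of F_{q^m} is a Sidon space (i.e., for all nonzero a,b,c,d ∈ U with ab = cd one has {aF_q, bF_q} = {cF_q, dF_q}) if and only if dim_{F_q}(U ∩ αU) ≤ 1 for every α ∈ F_{q^m} \ F_q. -/
/-- `U` is a Sidon space (products factor uniquely up to `F_q`-scalars) iff
`dim(U ∩ αU) ≤ 1` for every `α ∈ F_{q^m} \ F_q`. -/
theorem stmt_5 {Fq L : Type*} [Field Fq] [Field L] [Algebra Fq L]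
    [FiniteDimensional Fq L] (U : Submodule Fq L) :
    (∀ a ∈ U, ∀ b ∈ U, ∀ c ∈ U, ∀ d ∈ U,
        a ≠ 0 → b ≠ 0 → c ≠ 0 → d ≠ 0 → a * b = c * d →
        ({Submodule.span Fq {a}, Submodule.span Fq {b}} : Set (Submodule Fq L))
          = {Submodule.span Fq {c}, Submodule.span Fq {d}}) ↔
      (∀ α : L, α ∉ Set.range (algebraMap Fq L) →
        Module.finrank Fq ↥(U ⊓ U.map (LinearMap.mulLeft Fq α)) ≤ 1) := by
  constructor
  · intro hS α hα
    set W := U ⊓ U.map (LinearMap.mulLeft Fq α) with hW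
    by_cases hWb : W = ⊥
    · rw [hWb]
      simp
    · obtain ⟨x, hxW, hx0⟩ := W.ne_bot_iff.mp hWb
      have hle : W ≤ Submodule.span Fq {x} := by
        intro y hyW
        by_contra hy
        have hy0 : y ≠ 0 := by rintro rfl; exact hy (Submodule.zero_mem _)
        obtain ⟨hxU, u, huU, hux⟩ := hxW
        obtain ⟨hyU, v, hvU, hvy⟩ := hyW
        simp only [LinearMap.mulLeft_apply] at hux hvy
        have hu0 : u ≠ 0 := by rintro rfl; simp at hux; exact hx0 hux.symm
        have hv0 : v ≠ 0 := by rintro rfl; simp at hvy; exact hy0 hvy.symm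
        have hprod : x * v = u * y := by
          rw [← hux, ← hvy]; ring
        have := hS x hxU v hvU u huU y hyU hx0 hv0 hu0 hy0 hprod
        rcases Set.pair_eq_pair_iff.mp this with ⟨h1, h2⟩ | ⟨h1, h2⟩
        · -- span x = span u : then α ∈ Fq, contradiction
          have hxu : x ∈ Submodule.span Fq {u} := h1 ▸ Submodule.mem_span_singleton_self x
          obtain ⟨lam, hlam⟩ := Submodule.mem_span_singleton.mp hxu
          have : algebraMap Fq L lam * u = α * u := by
            rw [hux, ← hlam, Algebra.smul_def]
          have : algebraMap Fq L lam = α := mul_right_cancel₀ hu0 this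
          exact hα ⟨lam, this⟩
        · -- span x = span y : contradicts hy
          have : y ∈ Submodule.span Fq {x} := h1 ▸ Submodule.mem_span_singleton_self y
          exact hy this
      calc Module.finrank Fq ↥W ≤ Module.finrank Fq ↥(Submodule.span Fq {x}) :=
            Submodule.finrank_mono hle
        _ = 1 := finrank_span_singleton hx0
  · intro h a haU b hbU c hcU d hdU ha hb hc hd habcd
    set α := a / c with hαdef
    have hac : α * c = a := div_mul_cancel₀ a hc
    have hαb : α * b = d := by
      rw [hαdef, div_mul_eq_mul_div, habcd]
      exact mul_div_cancel_left₀ d hc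
    by_cases hr : α ∈ Set.range (algebraMap Fq L)
    · obtain ⟨lam, hlam⟩ := hr
      have hac' : a = lam • c := by rw [Algebra.smul_def, hlam, hac]
      have hdb : d = lam • b := by rw [Algebra.smul_def, hlam, hαb]
      have hlam0 : IsUnit lam := by
        rcases eq_or_ne lam 0 with rfl | h0
        · exfalso; apply ha; rw [hac', zero_smul]
        · exact h0.isUnit
      have h1 : Submodule.span Fq {a} = Submodule.span Fq {c} := by
        rw [hac']; exact Submodule.span_singleton_smul_eq hlam0 c
      have h2 : Submodule.span Fq {d} = Submodule.span Fq {b} := by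
        rw [hdb]; exact Submodule.span_singleton_smul_eq hlam0 b
      rw [h1, h2, Set.pair_comm]
    · have hfr := h α hr
      set W := U ⊓ U.map (LinearMap.mulLeft Fq α) with hW
      have haW : a ∈ W := ⟨haU, c, hcU, hac⟩
      have hdW : d ∈ W := ⟨hdU, b, hbU, hαb⟩
      have hspanle : Submodule.span Fq {a} ≤ W := by
        rw [Submodule.span_singleton_le_iff_mem]; exact haW
      have hWeq : Submodule.span Fq {a} = W := by
        apply Submodule.eq_of_le_of_finrank_le hspanle
        rw [finrank_span_singleton ha]
        exact hfr
      obtain ⟨mu, hmu⟩ := Submodule.mem_span_singleton.mp (hWeq ▸ hdW)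
      have hmu0 : IsUnit mu := by
        rcases eq_or_ne mu 0 with rfl | h0
        · exfalso; apply hd; rw [← hmu, zero_smul]
        · exact h0.isUnit
      have hbc : b = mu • c := by
        have : a * b = a * (mu • c) := by
          rw [habcd, ← hmu, Algebra.smul_def, Algebra.smul_def]; ring
        exact mul_left_cancel₀ ha this
      have h1 : Submodule.span Fq {b} = Submodule.span Fq {c} := by
        rw [hbc]; exact Submodule.span_singleton_smul_eq hmu0 c
      have h2 : Submodule.span Fq {d} = Submodule.span Fq {a} := by
        rw [← hmu]; exact Submodule.span_singleton_smul_eq hmu0 a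
      rw [h1, h2, Set.pair_comm]
end

section
/- There do not exist a prime power q ≥ 3, integers m ≥ 2k ≥ 6, a prime power q̄, and integer k' such that (q^m − 1, q^k, q) = ((q̄^2 − 1), q̄ − 2, 3). In particular, if q = 3 and q̄ = 3^k + 2, then 3^m − 1 ≠ (3^k + 2)^2 − 1. -/
/-!
`3 ^ m` is divisible by `3`, whereas `(3 ^ k + 2) ^ 2 ≡ 4 ≡ 1 [MOD 3]` once `k ≠ 0`.
-/

theorem three_pow_ne_sq_three_pow_add_two {m k : ℕ} (hm : m ≠ 0) (hk : k ≠ 0) :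
    3 ^ m ≠ (3 ^ k + 2) ^ 2 := by
  intro h
  have h3 : 3 ∣ 3 ^ k + 2 := Nat.prime_three.dvd_of_dvd_pow (h ▸ dvd_pow_self 3 hm)
  have : 3 ∣ 2 := (Nat.dvd_add_right (dvd_pow_self 3 hk)).mp h3
  omega

theorem three_pow_sub_one_ne_sq_three_pow_add_two_sub_one {m k : ℕ} (hm : m ≠ 0) (hk : k ≠ 0) :
    3 ^ m - 1 ≠ (3 ^ k + 2) ^ 2 - 1 := by
  have := Nat.one_le_pow m 3 (by norm_num)
  have := Nat.one_le_pow 2 (3 ^ k + 2) (by positivity)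
  have := three_pow_ne_sq_three_pow_add_two hm hk
  omega

/-- There are no prime power `q ≥ 3`, integers `m ≥ 2k ≥ 6` and prime power `q̄` with
`(q^m − 1, q^k, q) = (q̄^2 − 1, q̄ − 2, 3)`. In particular, if `q = 3` and
`q̄ = 3^k + 2`, then `3^m − 1 ≠ (3^k + 2)^2 − 1`. -/
theorem stmt_14 :
    (¬ ∃ q m k qb : ℕ, IsPrimePow q ∧ 3 ≤ q ∧ 3 ≤ k ∧ 2 * k ≤ m ∧ IsPrimePow qb ∧
        q ^ m - 1 = qb ^ 2 - 1 ∧ q ^ k = qb - 2 ∧ q = 3) ∧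
    (∀ m k : ℕ, 3 ≤ k → 2 * k ≤ m → 3 ^ m - 1 ≠ (3 ^ k + 2) ^ 2 - 1) := by
  have key {m k : ℕ} (hk : 3 ≤ k) (hm : 2 * k ≤ m) : 3 ^ m - 1 ≠ (3 ^ k + 2) ^ 2 - 1 :=
    three_pow_sub_one_ne_sq_three_pow_add_two_sub_one (by omega) (by omega)
  refine ⟨?_, fun m k hk hm => key hk hm⟩
  rintro ⟨q, m, k, qb, -, -, hk, hm, -, hlength, hweight, rfl⟩
  have hqb : qb = 3 ^ k + 2 := by
    have := Nat.one_le_pow k 3 (by norm_num)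
    omega
  exact key hk hm (hqb ▸ hlength)
end

section
/- Let λ ≥ 3 and k ≥ 3 be integers and let k', h be positive integers with h ≥ 1. Then λ^m − 1 ≠ ((λ^k+1)^{k'(λ+2)} − 1)/((λ^k+1)^{k'} − 1) for every m, because the right-hand side is congruent to λ + 2 modulo λ^k while the left-hand side is congruent to −1 modulo λ^k. -/
/-!
Put `y = (λ^k + 1)^{k'}`. The quotient is the geometric sum `1 + y + ⋯ + y^{λ+1}`, and
`y ≡ 1 [MOD λ^k]`, so the quotient is `≡ λ + 2 [MOD λ^k]`. If `m ≥ k` then `λ^m − 1 ≡ λ^k − 1`,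
which differs from `λ + 2 < λ^k`; if `m < k` then `λ^m − 1 < λ^k < y`, which is a single term
of the sum.
-/

open Finset

theorem Nat.geomSum_modEq_of_modEq_one {y N : ℕ} (hy : y ≡ 1 [MOD N]) (n : ℕ) :
    ∑ j ∈ range n, y ^ j ≡ n [MOD N] :=
  calc ∑ j ∈ range n, y ^ j ≡ ∑ _j ∈ range n, 1 [MOD N] :=
        Nat.ModEq.sum fun j _ => by simpa using hy.pow j
    _ = n := by simp

theorem Nat.sub_one_mod_of_dvd {a N : ℕ} (h : N ∣ a) (ha : 0 < a) : (a - 1) % N = N - 1 := by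
  obtain ⟨c, rfl⟩ := h
  obtain ⟨c, rfl⟩ : ∃ c', c = c' + 1 := Nat.exists_eq_succ_of_ne_zero (by rintro rfl; simp at ha)
  have hN : 0 < N := Nat.pos_of_mul_pos_right ha
  rw [show N * (c + 1) - 1 = N - 1 + N * c by rw [mul_add_one]; omega,
    Nat.add_mul_mod_self_left, Nat.mod_eq_of_lt (by omega)]

theorem stmt_16_general (lam k k' m : ℕ) (hlam : 3 ≤ lam) (hk : 3 ≤ k)
    (hk' : 1 ≤ k') :
    lam ^ m - 1 ≠
      ((lam ^ k + 1) ^ (k' * (lam + 2)) - 1) / ((lam ^ k + 1) ^ k' - 1) := by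
  have hlk : lam + 3 < lam ^ k :=
    calc lam + 3 < lam ^ 3 := by rw [pow_three]; nlinarith
      _ ≤ lam ^ k := Nat.pow_le_pow_right (by omega) hk
  have hy : lam ^ k < (lam ^ k + 1) ^ k' := Nat.le_self_pow (by omega) _
  have hy1 : (lam ^ k + 1) ^ k' ≡ 1 [MOD lam ^ k] := by
    simpa using (Nat.add_modEq_left (n := lam ^ k) (a := 1)).pow k'
  rw [pow_mul, ← Nat.geomSum_eq (by omega)]
  generalize (lam ^ k + 1) ^ k' = y at hy hy1 ⊢
  have hsum : (∑ j ∈ range (lam + 2), y ^ j) % lam ^ k = lam + 2 := by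
    rw [Nat.geomSum_modEq_of_modEq_one hy1 _, Nat.mod_eq_of_lt (by omega)]
  intro heq
  rcases le_or_gt k m with hkm | hmk
  · have hmod := Nat.sub_one_mod_of_dvd (pow_dvd_pow lam hkm) (by positivity)
    rw [heq, hsum] at hmod
    omega
  · have hm : lam ^ m < lam ^ k := Nat.pow_lt_pow_right (by omega) hmk
    have hterm : y ^ 1 ≤ ∑ j ∈ range (lam + 2), y ^ j :=
      single_le_sum (fun _ _ => Nat.zero_le _) (mem_range.2 (by omega))
    rw [pow_one] at hterm
    omega

/-- For integers `λ ≥ 3`, `k ≥ 3` and positive integers `k'`, `h`, one has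
`λ^m − 1 ≠ ((λ^k+1)^{k'(λ+2)} − 1)/((λ^k+1)^{k'} − 1)` for every `m`. -/
theorem stmt_16 (lam k k' h m : ℕ) (hlam : 3 ≤ lam) (hk : 3 ≤ k)
    (hk' : 1 ≤ k') (hh : 1 ≤ h) :
    lam ^ m - 1 ≠
      ((lam ^ k + 1) ^ (k' * (lam + 2)) - 1) / ((lam ^ k + 1) ^ k' - 1) :=
  stmt_16_general lam k k' m hlam hk hk'
end

section
/- Let q ≥ 3 be a prime power, k ≥ 2, m = 2k, and suppose U_1,…,U_r are k-dimensional F_q-subspaces of F_{q^m} forming a multi-orbit cyclic subspace code ∪_i C_{U_i} with r distinct orbits and minimum distance 2k − 2. Then the resulting optical orthogonal code has parameters (q^{2k} − 1, q^k, q) and size r(q^k − 1)/(q − 1). -/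
/-!
Via `i ↦ ω ^ i`, the cyclic shift by `τ` on `ℤ/(q^{2k} - 1)` becomes multiplication by
`α = ω ^ τ` on `L`, so every correlation value is the size of `(U_i + d) ∩ (α U_j + α e)`.
Two cosets meet in at most a coset of `U_i ∩ α U_j`, which has at most `q` elements by the
multi-Sidon condition, except when `i = j` and `α ∈ F_q^*`: then `α U_i = U_i`, and the cosets
`U_i + d`, `U_i + α e` are disjoint because the representatives are outside `U_i` and pairwise
non-proportional. The same two conditions make all `r t` translates distinct.
-/

/-- An `(n,w,λ)` optical orthogonal set. -/
def IsOOS (n w lam : ℕ) [NeZero n] (S : Set (Set (ZMod n))) : Prop :=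
  (∀ X ∈ S, Nat.card X = w) ∧
  (∀ X ∈ S, ∀ τ : ℕ, 0 < τ → τ < n →
    Nat.card ↥(X ∩ ((fun a => a + (τ : ZMod n)) '' X)) ≤ lam) ∧
  (∀ X ∈ S, ∀ Y ∈ S, X ≠ Y → ∀ τ : ℕ,
    Nat.card ↥(X ∩ ((fun a => a + (τ : ZMod n)) '' Y)) ≤ lam)

open Function Set

section PowVal

variable {M : Type*} [Monoid M] {x : M} {n : ℕ} [NeZero n]

theorem pow_val_add_natCast (hx : orderOf x = n) (i : ZMod n) (τ : ℕ) :
    x ^ (i + τ).val = x ^ τ * x ^ i.val := by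
  have hmod (m : ℕ) : x ^ (m % n) = x ^ m := hx ▸ pow_mod_orderOf x m
  rw [ZMod.val_add, ZMod.val_natCast, hmod, pow_add, hmod, (Commute.pow_pow_self x _ _).eq]

theorem injective_pow_val (hx : orderOf x = n) : Injective fun i : ZMod n => x ^ i.val :=
  fun i j hij => ZMod.val_injective n <|
    pow_injOn_Iio_orderOf (by simp [hx, ZMod.val_lt]) (by simp [hx, ZMod.val_lt]) hij

theorem image_add_natCast_preimage_pow_val (hx : orderOf x = n) (V : Set M) (τ : ℕ) :
    (· + (τ : ZMod n)) '' ((fun i : ZMod n => x ^ i.val) ⁻¹' V) =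
      (fun i : ZMod n => x ^ i.val) ⁻¹' ((x ^ τ * ·) '' V) := by
  have hunit : IsUnit (x ^ τ) :=
    (orderOf_pos_iff.mp (hx ▸ Nat.pos_of_neZero n)).isUnit.pow τ
  ext i
  rw [image_add_right, mem_preimage, mem_preimage, mem_preimage, ← sub_eq_add_neg,
    ← sub_add_cancel i (τ : ZMod n), pow_val_add_natCast hx, add_sub_cancel_right,
    hunit.mul_right_injective.mem_set_image]

theorem natCard_preimage_pow_val_inter_image_add_le [Finite M] (hx : orderOf x = n)
    (V W : Set M) (τ : ℕ) :
    Nat.card ↥((fun i : ZMod n => x ^ i.val) ⁻¹' V ∩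
        (· + (τ : ZMod n)) '' ((fun i : ZMod n => x ^ i.val) ⁻¹' W)) ≤
      Nat.card ↥(V ∩ (x ^ τ * ·) '' W) := by
  rw [image_add_natCast_preimage_pow_val hx, ← preimage_inter,
    ← Nat.card_image_of_injective (injective_pow_val hx)]
  exact Nat.card_mono (toFinite _) (image_preimage_subset _ _)

end PowVal

theorem range_units_pow_val {K : Type*} [GroupWithZero K] [Finite K] {ω : Kˣ} {n : ℕ}
    [NeZero n] (hω : orderOf (ω : K) = n) (hn : Nat.card Kˣ = n) :
    range (fun i : ZMod n => (ω : K) ^ i.val) = {0}ᶜ := by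
  have : Fintype Kˣ := Fintype.ofFinite _
  have hbij : Bijective fun i : ZMod n => ω ^ i.val := by
    rw [Fintype.bijective_iff_injective_and_card, ZMod.card, ← Nat.card_eq_fintype_card, hn]
    exact ⟨injective_pow_val (orderOf_units.symm.trans hω), rfl⟩
  ext y
  refine ⟨?_, fun hy => ?_⟩
  · rintro ⟨i, rfl⟩
    exact pow_ne_zero _ ω.ne_zero
  · obtain ⟨i, hi⟩ := hbij.surjective (Units.mk0 y hy)
    exact ⟨i, (Units.val_pow_eq_pow_val ω _).symm.trans (congrArg Units.val hi)⟩

section Translate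

variable {R M : Type*} [Ring R] [AddCommGroup M] [Module R M]

theorem mem_translate_iff {U : Submodule R M} {d x : M} :
    x ∈ (· + d) '' (U : Set M) ↔ x - d ∈ U := by
  rw [image_add_right, mem_preimage, ← sub_eq_add_neg, SetLike.mem_coe]

theorem natCard_translate_inter_translate_le [Finite M] (U W : Submodule R M) (d e : M) :
    Nat.card ↥((· + d) '' (U : Set M) ∩ (· + e) '' (W : Set M)) ≤
      Nat.card ↥(U ⊓ W) := by
  rcases ((· + d) '' (U : Set M) ∩ (· + e) '' (W : Set M)).eq_empty_or_nonempty with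
    h | ⟨x₀, hx₀⟩
  · rw [h]; simp
  calc _ ≤ Nat.card ↥((· + x₀) '' ((U ⊓ W : Submodule R M) : Set M)) := by
        refine Nat.card_mono (toFinite _) fun x hx => ?_
        simp only [mem_inter_iff, mem_translate_iff] at hx hx₀ ⊢
        have hU := sub_mem hx.1 hx₀.1
        have hW := sub_mem hx.2 hx₀.2
        rw [sub_sub_sub_cancel_right] at hU hW
        exact ⟨hU, hW⟩
    _ = Nat.card ↥(U ⊓ W) := Nat.card_image_of_injective (add_left_injective x₀) _

theorem translate_inter_translate_eq_empty {U : Submodule R M} {d e : M} (h : d - e ∉ U) :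
    (· + d) '' (U : Set M) ∩ (· + e) '' (U : Set M) = ∅ := by
  refine eq_empty_of_forall_notMem fun x hx => h ?_
  simp only [mem_inter_iff, mem_translate_iff] at hx
  rw [← sub_sub_sub_cancel_left e d x]
  exact sub_mem hx.2 hx.1

theorem eq_and_sub_mem_of_translate_eq {U W : Submodule R M} {d e : M}
    (h : (· + d) '' (U : Set M) = (· + e) '' (W : Set M)) : U = W ∧ d - e ∈ W := by
  have hmem (x : M) : x - d ∈ U ↔ x - e ∈ W := by
    rw [← mem_translate_iff, h, mem_translate_iff]
  have hde : d - e ∈ W := (hmem d).mp (by simp)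
  refine ⟨Submodule.ext fun u => ?_, hde⟩
  calc u ∈ U ↔ u + d - d ∈ U := by rw [add_sub_cancel_right]
    _ ↔ u + (d - e) ∈ W := by rw [hmem, add_sub_assoc]
    _ ↔ u ∈ W := W.add_mem_iff_left hde

theorem natCard_le_of_finrank_le_one {K V : Type*} [DivisionRing K] [AddCommGroup V] [Module K V]
    [Finite K] [Finite V] (W : Submodule K V) (h : Module.finrank K W ≤ 1) :
    Nat.card W ≤ Nat.card K := by
  rw [Module.natCard_eq_pow_finrank (K := K)]
  exact (Nat.pow_le_pow_right Nat.card_pos h).trans_eq (pow_one _)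

end Translate

section Algebra

variable {R A : Type*} [CommRing R] [Ring A] [Algebra R A]

theorem image_mul_left_translate (U : Submodule R A) (α d : A) :
    (α * ·) '' ((· + d) '' (U : Set A)) =
      (· + α * d) '' ((U.map (LinearMap.mulLeft R α) : Submodule R A) : Set A) := by
  rw [Submodule.map_coe, image_image, image_image]
  simp [mul_add]

theorem map_mulLeft_algebraMap {K : Type*} [Field K] [Algebra K A] (U : Submodule K A) {c : K}
    (hc : c ≠ 0) : U.map (LinearMap.mulLeft K (algebraMap K A c)) = U := by
  have : LinearMap.mulLeft K (algebraMap K A c) = c • LinearMap.id := by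
    ext; simp [Algebra.smul_def]
  rw [this, Submodule.map_smul _ _ _ hc, Submodule.map_id]

end Algebra

section MultiOrbitCode

variable {K L : Type*} [Field K] [Field L] [Algebra K L] {r t : ℕ}
  (U : Fin r → Submodule K L) (D : Fin r → Fin t → L)

def translates (p : Fin r × Fin t) : Set L := (· + D p.1 p.2) '' (U p.1 : Set L)

theorem range_translates :
    range (translates U D) = {V | ∃ i j, V = (· + D i j) '' (U i : Set L)} := by
  ext V
  simp [translates, eq_comm]

theorem natCard_translates (p : Fin r × Fin t) :
    Nat.card (translates U D p) = Nat.card (U p.1) :=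
  Nat.card_image_of_injective (add_left_injective _) _

theorem zero_notMem_translates (hD0 : ∀ i j, D i j ∉ U i) (p : Fin r × Fin t) :
    (0 : L) ∉ translates U D p := by
  rw [translates, mem_translate_iff, zero_sub, neg_mem_iff]
  exact hD0 p.1 p.2

theorem translates_injective
    (horb : ∀ i j : Fin r, i ≠ j → ∀ α : L, α ≠ 0 →
      (U i).map (LinearMap.mulLeft K α) ≠ U j)
    (hDprop : ∀ i, ∀ j h : Fin t, j ≠ h →
      ¬ ∃ c : K, c ≠ 0 ∧ D i j - algebraMap K L c * D i h ∈ U i) :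
    Injective (translates U D) := by
  rintro ⟨i, j⟩ ⟨i', h⟩ heq
  obtain ⟨hU, hD⟩ := eq_and_sub_mem_of_translate_eq heq
  obtain rfl : i = i' := by
    by_contra hii
    exact horb i i' hii 1 one_ne_zero (by rw [LinearMap.mulLeft_one, Submodule.map_id, hU])
  obtain rfl : j = h := by
    by_contra hjh
    exact hDprop i j h hjh ⟨1, one_ne_zero, by simpa using hD⟩
  rfl

theorem natCard_translates_inter_mul_le [Finite K] [Finite L]
    (hauto : ∀ i, ∀ α : L, α ∉ range (algebraMap K L) →
      Module.finrank K ↥(U i ⊓ (U i).map (LinearMap.mulLeft K α)) ≤ 1)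
    (hcross : ∀ i j : Fin r, i ≠ j → ∀ α : L, α ≠ 0 →
      Module.finrank K ↥(U i ⊓ (U j).map (LinearMap.mulLeft K α)) ≤ 1)
    (hD0 : ∀ i j, D i j ∉ U i)
    (hDprop : ∀ i, ∀ j h : Fin t, j ≠ h →
      ¬ ∃ c : K, c ≠ 0 ∧ D i j - algebraMap K L c * D i h ∈ U i)
    {p p' : Fin r × Fin t} {α : L} (hα : α ≠ 0) (hpα : p ≠ p' ∨ α ≠ 1) :
    Nat.card ↥(translates U D p ∩ (α * ·) '' translates U D p') ≤ Nat.card K := by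
  obtain ⟨i, j⟩ := p
  obtain ⟨i', h⟩ := p'
  rw [translates, translates, image_mul_left_translate]
  by_cases hii : i = i'
  swap
  · exact (natCard_translate_inter_translate_le _ _ _ _).trans
      (natCard_le_of_finrank_le_one _ (hcross i i' hii α hα))
  subst hii
  by_cases hαK : α ∈ range (algebraMap K L)
  swap
  · exact (natCard_translate_inter_translate_le _ _ _ _).trans
      (natCard_le_of_finrank_le_one _ (hauto i α hαK))
  obtain ⟨c, rfl⟩ := hαK
  have hc : c ≠ 0 := by rintro rfl; exact hα (map_zero _)
  suffices hmem : D i j - algebraMap K L c * D i h ∉ U i by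
    rw [map_mulLeft_algebraMap _ hc, translate_inter_translate_eq_empty hmem]
    simp
  by_cases hjh : j = h
  · subst hjh
    have hc1 : 1 - c ≠ 0 := by
      rintro hc1
      rw [← sub_eq_zero.mp hc1, map_one] at hpα
      simp at hpα
    have hsmul : D i j - algebraMap K L c * D i j = (1 - c) • D i j := by
      rw [sub_smul, one_smul, Algebra.smul_def]
    rw [hsmul, Submodule.smul_mem_iff _ hc1]
    exact hD0 i j
  · exact fun hmem => hDprop i j h hjh ⟨c, hc, hmem⟩

end MultiOrbitCode

theorem stmt_18_general {Fq L : Type*} [Field Fq] [Field L] [Algebra Fq L]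
    [Fintype Fq] [Fintype L] (q k r t : ℕ)
    (hFq : Fintype.card Fq = q) (hL : Fintype.card L = q ^ (2 * k))
    [NeZero (q ^ (2 * k) - 1)]
    (ht : t = (q ^ k - 1) / (q - 1))
    (ω : Lˣ) (hω : ∀ u : Lˣ, u ∈ Subgroup.zpowers ω)
    (U : Fin r → Submodule Fq L) (hUk : ∀ i, Module.finrank Fq (U i) = k)
    -- the r orbits are pairwise distinct
    (horb : ∀ i j : Fin r, i ≠ j → ∀ α : L, α ≠ 0 →
      (U i).map (LinearMap.mulLeft Fq α) ≠ U j)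
    -- minimum distance 2k−2 (multi-Sidon space condition)
    (hauto : ∀ i, ∀ α : L, α ∉ Set.range (algebraMap Fq L) →
      Module.finrank Fq ↥(U i ⊓ (U i).map (LinearMap.mulLeft Fq α)) ≤ 1)
    (hcross : ∀ i j : Fin r, i ≠ j → ∀ α : L, α ≠ 0 →
      Module.finrank Fq ↥(U i ⊓ (U j).map (LinearMap.mulLeft Fq α)) ≤ 1)
    -- pairwise non-F_q-proportional nonzero coset representatives
    (D : Fin r → Fin t → L) (hD0 : ∀ i j, D i j ∉ U i)
    (hDprop : ∀ i, ∀ j h : Fin t, j ≠ h →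
      ¬ ∃ lam : Fq, lam ≠ 0 ∧ D i j - algebraMap Fq L lam * D i h ∈ U i)
    (A : Set (Set L))
    (hA : A = {V : Set L | ∃ i j, V = (fun u => u + D i j) '' ((U i : Set L))}) :
    IsOOS (q ^ (2 * k) - 1) (q ^ k) q
        ((fun V : Set L =>
          ({i : ZMod (q ^ (2 * k) - 1) | (ω : L) ^ i.val ∈ V} :
            Set (ZMod (q ^ (2 * k) - 1)))) '' A) ∧
    Nat.card ((fun V : Set L =>
          ({i : ZMod (q ^ (2 * k) - 1) | (ω : L) ^ i.val ∈ V} :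
            Set (ZMod (q ^ (2 * k) - 1)))) '' A)
      = r * ((q ^ k - 1) / (q - 1)) := by
  subst hA
  have hq : Nat.card Fq = q := by rw [Nat.card_eq_fintype_card, hFq]
  have hunits : Nat.card Lˣ = q ^ (2 * k) - 1 := by
    rw [Nat.card_units, Nat.card_eq_fintype_card, hL]
  have hord : orderOf (ω : L) = q ^ (2 * k) - 1 := by
    rw [orderOf_units, orderOf_eq_card_of_forall_mem_zpowers hω, hunits]
  have hsub (p : Fin r × Fin t) :
      translates U D p ⊆ range fun i : ZMod (q ^ (2 * k) - 1) => (ω : L) ^ i.val := by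
    rw [range_units_pow_val hord hunits]
    exact fun x hx hx0 => zero_notMem_translates U D hD0 p (hx0 ▸ hx)
  have hinj : Injective fun p =>
      (fun i : ZMod (q ^ (2 * k) - 1) => (ω : L) ^ i.val) ⁻¹' translates U D p :=
    fun p p' h => translates_injective U D horb hDprop <|
      (preimage_eq_preimage' (hsub p) (hsub p')).1 h
  have hcorr {p p' : Fin r × Fin t} {τ : ℕ} (h : p ≠ p' ∨ (ω : L) ^ τ ≠ 1) :
      Nat.card ↥((fun i : ZMod (q ^ (2 * k) - 1) => (ω : L) ^ i.val) ⁻¹' translates U D p ∩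
        (· + (τ : ZMod _)) '' ((fun i : ZMod _ => (ω : L) ^ i.val) ⁻¹' translates U D p')) ≤
        q :=
    (natCard_preimage_pow_val_inter_image_add_le hord _ _ τ).trans <| hq ▸
      natCard_translates_inter_mul_le U D hauto hcross hD0 hDprop (pow_ne_zero _ ω.ne_zero) h
  rw [← range_translates, ← range_comp]
  refine ⟨⟨?_, ?_, ?_⟩, ?_⟩
  · rintro _ ⟨p, rfl⟩
    refine (Nat.card_preimage_of_injective (injective_pow_val hord) (hsub p)).trans ?_
    rw [natCard_translates, Module.natCard_eq_pow_finrank (K := Fq), hUk, hq]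
  · rintro _ ⟨p, rfl⟩ τ hτ0 hτn
    exact hcorr (Or.inr (pow_ne_one_of_lt_orderOf hτ0.ne' (hord ▸ hτn)))
  · rintro _ ⟨p, rfl⟩ _ ⟨p', rfl⟩ hne τ
    exact hcorr (Or.inl (by rintro rfl; exact hne rfl))
  · refine (Nat.card_range_of_injective hinj).trans ?_
    rw [Nat.card_prod, Nat.card_fin, Nat.card_fin, ht]

/-- For `q ≥ 3`, `m = 2k` and a multi-orbit cyclic subspace code `∪ᵢ C_{Uᵢ}` with `r`
distinct orbits and minimum distance `2k−2` (multi-Sidon condition), the resulting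
optical orthogonal code has parameters `(q^{2k} − 1, q^k, q)` and size
`r(q^k − 1)/(q − 1)`. -/
theorem stmt_18 {Fq L : Type*} [Field Fq] [Field L] [Algebra Fq L]
    [Fintype Fq] [Fintype L] (q k r t : ℕ) (hq : IsPrimePow q) (hq3 : 3 ≤ q)
    (hk : 2 ≤ k) (hFq : Fintype.card Fq = q) (hL : Fintype.card L = q ^ (2 * k))
    [NeZero (q ^ (2 * k) - 1)]
    (ht : t = (q ^ k - 1) / (q - 1))
    (ω : Lˣ) (hω : ∀ u : Lˣ, u ∈ Subgroup.zpowers ω)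
    (U : Fin r → Submodule Fq L) (hUk : ∀ i, Module.finrank Fq (U i) = k)
    -- the r orbits are pairwise distinct
    (horb : ∀ i j : Fin r, i ≠ j → ∀ α : L, α ≠ 0 →
      (U i).map (LinearMap.mulLeft Fq α) ≠ U j)
    -- minimum distance 2k−2 (multi-Sidon space condition)
    (hauto : ∀ i, ∀ α : L, α ∉ Set.range (algebraMap Fq L) →
      Module.finrank Fq ↥(U i ⊓ (U i).map (LinearMap.mulLeft Fq α)) ≤ 1)
    (hcross : ∀ i j : Fin r, i ≠ j → ∀ α : L, α ≠ 0 →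
      Module.finrank Fq ↥(U i ⊓ (U j).map (LinearMap.mulLeft Fq α)) ≤ 1)
    -- pairwise non-F_q-proportional nonzero coset representatives
    (D : Fin r → Fin t → L) (hD0 : ∀ i j, D i j ∉ U i)
    (hDprop : ∀ i, ∀ j h : Fin t, j ≠ h →
      ¬ ∃ lam : Fq, lam ≠ 0 ∧ D i j - algebraMap Fq L lam * D i h ∈ U i)
    (A : Set (Set L))
    (hA : A = {V : Set L | ∃ i j, V = (fun u => u + D i j) '' ((U i : Set L))}) :
    IsOOS (q ^ (2 * k) - 1) (q ^ k) q
        ((fun V : Set L =>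
          ({i : ZMod (q ^ (2 * k) - 1) | (ω : L) ^ i.val ∈ V} :
            Set (ZMod (q ^ (2 * k) - 1)))) '' A) ∧
    Nat.card ((fun V : Set L =>
          ({i : ZMod (q ^ (2 * k) - 1) | (ω : L) ^ i.val ∈ V} :
            Set (ZMod (q ^ (2 * k) - 1)))) '' A)
      = r * ((q ^ k - 1) / (q - 1)) :=
  stmt_18_general q k r t hFq hL ht ω hω U hUk horb hauto hcross D hD0 hDprop A hA
end
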